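/- arXiv:1805.10674 — 4 statements merged into one kernel-verified Lean document; each statement's English description precedes it below -/
import Mathlib

section
/- Let r > 0 and let x : ℝ → ℝ^d be a function whose initial segment ξ := x_0 satisfies ‖ξ‖_r < ∞. Then for every t ≥ 0, ‖x_t‖²_r ≤ e^{−2rt}‖ξ‖²_r + sup_{0 ≤ s ≤ t}|x(s)|². -/
open scoped ENNReal NNReal

/-- The segment `x_t(θ) = x(t + θ)`. -/
def seg {d : ℕ} (x : ℝ → EuclideanSpace ℝ (Fin d)) (t : ℝ) :
    ℝ → EuclideanSpace ℝ (Fin d) := fun θ => x (t + θ)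

/-- The weighted norm `‖φ‖_r = sup_{θ ≤ 0} e^{rθ} |φ(θ)|`, valued in `[0,∞]`. -/
noncomputable def rnormE {d : ℕ} (r : ℝ) (φ : ℝ → EuclideanSpace ℝ (Fin d)) : ℝ≥0∞ :=
  ⨆ θ : Set.Iic (0 : ℝ), ENNReal.ofReal (Real.exp (r * θ.1)) * (‖φ θ.1‖₊ : ℝ≥0∞)

/-
Split the supremum defining `‖x_t‖_r` at `θ = -t`. For `t + θ ≤ 0` the weight factors as
`e^{rθ} = e^{-rt} e^{r(t+θ)}`, so those terms are bounded by `e^{-rt} ‖x_0‖_r`; for `t + θ > 0`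
the point `t + θ` lies in `[0, t]` and the weight is at most `1`. Hence `‖x_t‖_r` is at most the
maximum of the two bounds, and `max(a, b)² ≤ a² + b²`.
-/

section WeightedNorm

variable {d : ℕ} {r : ℝ}

lemma le_rnormE (φ : ℝ → EuclideanSpace ℝ (Fin d)) {θ : ℝ} (hθ : θ ≤ 0) :
    ENNReal.ofReal (Real.exp (r * θ)) * ‖φ θ‖₊ ≤ rnormE r φ :=
  le_iSup (fun θ : Set.Iic (0 : ℝ) => ENNReal.ofReal (Real.exp (r * θ.1)) * (‖φ θ.1‖₊ : ℝ≥0∞))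
    ⟨θ, hθ⟩

variable (x : ℝ → EuclideanSpace ℝ (Fin d)) {t θ : ℝ}

lemma weighted_seg_le_of_add_nonpos (h : t + θ ≤ 0) :
    ENNReal.ofReal (Real.exp (r * θ)) * ‖seg x t θ‖₊
      ≤ ENNReal.ofReal (Real.exp (-(r * t))) * rnormE r (seg x 0) := by
  have hexp : Real.exp (r * θ) = Real.exp (-(r * t)) * Real.exp (r * (t + θ)) := by
    rw [← Real.exp_add]; ring_nf
  rw [hexp, ENNReal.ofReal_mul (Real.exp_nonneg _), mul_assoc]
  gcongr
  simpa [seg] using le_rnormE (r := r) (seg x 0) h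

lemma weighted_seg_le_of_nonpos (hr : 0 ≤ r) (hθ : θ ≤ 0) :
    ENNReal.ofReal (Real.exp (r * θ)) * ‖seg x t θ‖₊ ≤ ‖x (t + θ)‖₊ := by
  have hweight : ENNReal.ofReal (Real.exp (r * θ)) ≤ 1 :=
    ENNReal.ofReal_le_one.2 (Real.exp_le_one_iff.2 (mul_nonpos_of_nonneg_of_nonpos hr hθ))
  simpa [seg] using mul_le_of_le_one_left zero_le hweight

lemma rnormE_seg_le (hr : 0 ≤ r) :
    rnormE r (seg x t)
      ≤ max (ENNReal.ofReal (Real.exp (-(r * t))) * rnormE r (seg x 0))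
          (⨆ s : Set.Icc (0 : ℝ) t, (‖x s.1‖₊ : ℝ≥0∞)) := by
  refine iSup_le fun ⟨θ, hθ⟩ => ?_
  rcases le_or_gt (t + θ) 0 with h | h
  · exact le_max_of_le_left (weighted_seg_le_of_add_nonpos x h)
  · have hs : t + θ ∈ Set.Icc 0 t := ⟨h.le, by linarith [Set.mem_Iic.1 hθ]⟩
    exact le_max_of_le_right <| (weighted_seg_le_of_nonpos x hr hθ).trans <|
      le_iSup (fun s : Set.Icc (0 : ℝ) t => (‖x s.1‖₊ : ℝ≥0∞)) ⟨t + θ, hs⟩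

end WeightedNorm

lemma ENNReal.max_sq_le_sq_add_sq (a b : ℝ≥0∞) : max a b ^ 2 ≤ a ^ 2 + b ^ 2 := by
  rw [(pow_left_mono 2).map_max]
  exact max_le le_self_add le_add_self

theorem segment_norm_sq_bound_general {d : ℕ} (r : ℝ) (hr : 0 < r)
    (x : ℝ → EuclideanSpace ℝ (Fin d))
    (t : ℝ) :
    (rnormE r (seg x t)) ^ 2
      ≤ ENNReal.ofReal (Real.exp (-2 * r * t)) * (rnormE r (seg x 0)) ^ 2
        + ⨆ s : Set.Icc (0 : ℝ) t, (‖x s.1‖₊ : ℝ≥0∞) ^ 2 := by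
  have hexp :
      ENNReal.ofReal (Real.exp (-(r * t))) ^ 2 = ENNReal.ofReal (Real.exp (-2 * r * t)) := by
    rw [← ENNReal.ofReal_pow (Real.exp_nonneg _), ← Real.exp_nat_mul]
    ring_nf
  calc rnormE r (seg x t) ^ 2
      ≤ max (ENNReal.ofReal (Real.exp (-(r * t))) * rnormE r (seg x 0))
          (⨆ s : Set.Icc (0 : ℝ) t, (‖x s.1‖₊ : ℝ≥0∞)) ^ 2 := by
        gcongr; exact rnormE_seg_le x hr.le
    _ ≤ _ := by
        grw [ENNReal.max_sq_le_sq_add_sq, mul_pow, hexp, ENNReal.iSup_pow_of_ne_zero two_ne_zero]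

/-- if `ξ := x_0` satisfies `‖ξ‖_r < ∞`, then for every `t ≥ 0`,
`‖x_t‖²_r ≤ e^{−2rt} ‖ξ‖²_r + sup_{0 ≤ s ≤ t} |x(s)|²`. -/
theorem segment_norm_sq_bound {d : ℕ} (r : ℝ) (hr : 0 < r)
    (x : ℝ → EuclideanSpace ℝ (Fin d))
    (hfin : rnormE r (seg x 0) < ⊤) (t : ℝ) (ht : 0 ≤ t) :
    (rnormE r (seg x t)) ^ 2
      ≤ ENNReal.ofReal (Real.exp (-2 * r * t)) * (rnormE r (seg x 0)) ^ 2
        + ⨆ s : Set.Icc (0 : ℝ) t, (‖x s.1‖₊ : ℝ≥0∞) ^ 2 :=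
  segment_norm_sq_bound_general r hr x t
end

section
/- Let r > 0, let n be a positive integer with n ≥ r/ln 2, let t ≥ 0 and set t_n := ⌊nt⌋/n. Let x : ℝ → ℝ^d be a function with ‖x_t‖_r < ∞, and define the frozen segment x̂_t : (−∞,0] → ℝ^d by x̂_t(θ) := x((t+θ) ∧ t_n). Then ‖x̂_t‖_r ≤ ‖x_t‖_r + |x(t_n)| ≤ 3‖x_t‖_r. -/
/-- The weighted norm `‖φ‖_r = sup_{θ ≤ 0} e^{rθ} |φ(θ)|` (as a real supremum). -/
noncomputable def rnorm {d : ℕ} (r : ℝ) (φ : ℝ → EuclideanSpace ℝ (Fin d)) : ℝ :=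
  sSup ((fun θ => Real.exp (r * θ) * ‖φ θ‖) '' Set.Iic 0)

/-- The Euler–Maruyama discretization point `t_n = ⌊nt⌋/n`. -/
noncomputable def tdisc (n : ℕ) (t : ℝ) : ℝ := (⌊(n : ℝ) * t⌋ : ℝ) / n

/-- The frozen (Euler–Maruyama) segment `x̂_t(θ) = x((t + θ) ∧ t_n)`. -/
noncomputable def frozenSeg {d : ℕ} (x : ℝ → EuclideanSpace ℝ (Fin d)) (n : ℕ) (t : ℝ) :
    ℝ → EuclideanSpace ℝ (Fin d) := fun θ => x (min (t + θ) (tdisc n t))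

/-!
Splitting `θ ≤ 0` according to whether `t + θ ≤ t_n`, the frozen segment is either a value of
`x_t` or the constant `x(t_n)` damped by `e^{rθ} ≤ 1`; this gives the first inequality. For the
second, `x(t_n) = x_t(t_n - t)` is controlled by `e^{r(t - t_n)} ‖x_t‖_r`, and
`r (t - t_n) ≤ r / n ≤ log 2` makes the factor at most `2`.
-/

open Real Set

lemma tdisc_le {n : ℕ} (hn : 0 < n) (t : ℝ) : tdisc n t ≤ t := by
  have hn' : (0 : ℝ) < n := by exact_mod_cast hn
  rw [tdisc, div_le_iff₀ hn', mul_comm]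
  exact Int.floor_le _

lemma sub_tdisc_le {n : ℕ} (hn : 0 < n) (t : ℝ) : t - tdisc n t ≤ 1 / n := by
  have hn' : (0 : ℝ) < n := by exact_mod_cast hn
  rw [tdisc, sub_le_iff_le_add, ← add_div, le_div_iff₀ hn']
  linarith [Int.lt_floor_add_one ((n : ℝ) * t)]

lemma mul_sub_tdisc_le_log_two {r : ℝ} (hr : 0 < r) {n : ℕ} (hn : 0 < n)
    (hnr : r / log 2 ≤ n) (t : ℝ) : r * (t - tdisc n t) ≤ log 2 := by
  have hn' : (0 : ℝ) < n := by exact_mod_cast hn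
  calc r * (t - tdisc n t) ≤ r * (1 / n) := mul_le_mul_of_nonneg_left (sub_tdisc_le hn t) hr.le
    _ = r / n := mul_one_div r n
    _ ≤ log 2 := by
      rw [div_le_iff₀ hn', mul_comm]
      exact (div_le_iff₀ (log_pos one_lt_two)).1 hnr

section rnorm

variable {d : ℕ} {r : ℝ} {φ : ℝ → EuclideanSpace ℝ (Fin d)}

lemma rnorm_nonneg : 0 ≤ rnorm r φ :=
  Real.sSup_nonneg <| by
    rintro _ ⟨θ, -, rfl⟩
    positivity

lemma le_rnorm (hφ : BddAbove ((fun θ => exp (r * θ) * ‖φ θ‖) '' Iic 0)) {θ : ℝ} (hθ : θ ≤ 0) :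
    exp (r * θ) * ‖φ θ‖ ≤ rnorm r φ :=
  le_csSup hφ ⟨θ, hθ, rfl⟩

end rnorm

section segment

variable {d : ℕ} {r : ℝ} {x : ℝ → EuclideanSpace ℝ (Fin d)} {t : ℝ}

lemma rnorm_seg_min_le (hr : 0 ≤ r)
    (hfin : BddAbove ((fun θ => exp (r * θ) * ‖seg x t θ‖) '' Iic 0)) (s : ℝ) :
    rnorm r (fun θ => x (min (t + θ) s)) ≤ rnorm r (seg x t) + ‖x s‖ := by
  refine Real.sSup_le ?_ (add_nonneg rnorm_nonneg (norm_nonneg _))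
  rintro _ ⟨θ, hθ, rfl⟩
  dsimp only
  rcases le_total (t + θ) s with hts | hst
  · rw [min_eq_left hts]
    have h : exp (r * θ) * ‖x (t + θ)‖ ≤ rnorm r (seg x t) := le_rnorm hfin hθ
    linarith [norm_nonneg (x s)]
  · rw [min_eq_right hst]
    have hexp : exp (r * θ) ≤ 1 := exp_le_one_iff.2 (mul_nonpos_of_nonneg_of_nonpos hr hθ)
    linarith [mul_le_of_le_one_left (norm_nonneg (x s)) hexp, rnorm_nonneg (r := r) (φ := seg x t)]

lemma norm_le_exp_mul_rnorm_seg
    (hfin : BddAbove ((fun θ => exp (r * θ) * ‖seg x t θ‖) '' Iic 0)) {s : ℝ} (hs : s ≤ t) :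
    ‖x s‖ ≤ exp (r * (t - s)) * rnorm r (seg x t) := by
  calc ‖x s‖ = exp (r * (t - s)) * (exp (r * (s - t)) * ‖seg x t (s - t)‖) := by
        rw [seg, add_sub_cancel, ← mul_assoc, ← exp_add, ← mul_add, sub_add_sub_cancel, sub_self,
          mul_zero, exp_zero, one_mul]
    _ ≤ exp (r * (t - s)) * rnorm r (seg x t) := by
        gcongr
        exact le_rnorm hfin (sub_nonpos.2 hs)

end segment

theorem frozen_segment_bound_general {d : ℕ} (r : ℝ) (hr : 0 < r) (n : ℕ) (hn : 0 < n)
    (hnr : r / Real.log 2 ≤ (n : ℝ)) (t : ℝ)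
    (x : ℝ → EuclideanSpace ℝ (Fin d))
    (hfin : BddAbove ((fun θ => Real.exp (r * θ) * ‖seg x t θ‖) '' Set.Iic 0)) :
    rnorm r (frozenSeg x n t) ≤ rnorm r (seg x t) + ‖x (tdisc n t)‖ ∧
    rnorm r (seg x t) + ‖x (tdisc n t)‖ ≤ 3 * rnorm r (seg x t) := by
  refine ⟨rnorm_seg_min_le hr.le hfin _, ?_⟩
  have hexp : exp (r * (t - tdisc n t)) ≤ 2 := by
    rw [← exp_log two_pos]
    exact exp_le_exp.2 (mul_sub_tdisc_le_log_two hr hn hnr t)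
  have hxtn := norm_le_exp_mul_rnorm_seg hfin (tdisc_le hn t)
  linarith [mul_le_mul_of_nonneg_right hexp (rnorm_nonneg (r := r) (φ := seg x t))]

/-- for `n ≥ r / ln 2`, `t ≥ 0`, `t_n := ⌊nt⌋/n` and `‖x_t‖_r < ∞`, the frozen
segment `x̂_t(θ) := x((t+θ) ∧ t_n)` satisfies `‖x̂_t‖_r ≤ ‖x_t‖_r + |x(t_n)| ≤ 3 ‖x_t‖_r`. -/
theorem frozen_segment_bound {d : ℕ} (r : ℝ) (hr : 0 < r) (n : ℕ) (hn : 0 < n)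
    (hnr : r / Real.log 2 ≤ (n : ℝ)) (t : ℝ) (ht : 0 ≤ t)
    (x : ℝ → EuclideanSpace ℝ (Fin d))
    (hfin : BddAbove ((fun θ => Real.exp (r * θ) * ‖seg x t θ‖) '' Set.Iic 0)) :
    rnorm r (frozenSeg x n t) ≤ rnorm r (seg x t) + ‖x (tdisc n t)‖ ∧
    rnorm r (seg x t) + ‖x (tdisc n t)‖ ≤ 3 * rnorm r (seg x t) :=
  frozen_segment_bound_general r hr n hn hnr t x hfin
end

section
/- Let r > 0, let n be a positive integer with n ≥ r/ln 2, let t ≥ 0 and set t_n := ⌊nt⌋/n. Let x : ℝ → ℝ^d be a function with ‖x_t‖_r < ∞, define x̂_t(θ) := x((t+θ) ∧ t_n) for θ ≤ 0, and let p_t := x_t − x̂_t. Then ‖p_t‖_r ≤ 4‖x_t‖_r; in particular, if ‖x_t‖_r ≤ R/3 for some R > 0, then ‖p_t‖_r ≤ (4/3)R. -/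
/-- for `n ≥ r / ln 2`, `t ≥ 0` and `‖x_t‖_r < ∞`, the discretization error
segment `p_t := x_t − x̂_t` satisfies `‖p_t‖_r ≤ 4 ‖x_t‖_r`; in particular if
`‖x_t‖_r ≤ R/3` for some `R > 0` then `‖p_t‖_r ≤ (4/3) R`. -/
theorem discretization_error_bound {d : ℕ} (r : ℝ) (hr : 0 < r) (n : ℕ) (hn : 0 < n)
    (hnr : r / Real.log 2 ≤ (n : ℝ)) (t : ℝ) (ht : 0 ≤ t)
    (x : ℝ → EuclideanSpace ℝ (Fin d))
    (hfin : BddAbove ((fun θ => Real.exp (r * θ) * ‖seg x t θ‖) '' Set.Iic 0)) :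
    rnorm r (seg x t - frozenSeg x n t) ≤ 4 * rnorm r (seg x t) ∧
    ∀ R : ℝ, 0 < R → rnorm r (seg x t) ≤ R / 3 →
      rnorm r (seg x t - frozenSeg x n t) ≤ 4 / 3 * R := by
  have hn' : (0:ℝ) < n := by exact_mod_cast hn
  set M := rnorm r (seg x t) with hMdef
  have hmem : ∀ θ ≤ (0:ℝ), Real.exp (r * θ) * ‖seg x t θ‖ ≤ M := fun θ hθ =>
    le_csSup hfin ⟨θ, hθ, rfl⟩
  have hM0 : 0 ≤ M := le_trans (by positivity) (hmem 0 le_rfl)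
  -- tdisc facts
  have htn_le : tdisc n t ≤ t := by
    rw [tdisc, div_le_iff₀ hn']
    calc ((⌊(n:ℝ)*t⌋ : ℝ)) ≤ (n:ℝ)*t := Int.floor_le _
    _ = t * n := mul_comm _ _
  have h1n : t - tdisc n t ≤ 1 / n := by
    rw [tdisc, sub_le_iff_le_add, ← add_div, le_div_iff₀ hn']
    have := Int.lt_floor_add_one ((n:ℝ)*t)
    nlinarith
  have hrn : r * (t - tdisc n t) ≤ Real.log 2 := by
    have h2 : Real.log 2 > 0 := Real.log_pos (by norm_num)
    have : r ≤ (n:ℝ) * Real.log 2 := by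
      rw [div_le_iff₀ h2] at hnr; exact hnr
    calc r * (t - tdisc n t) ≤ r * (1/n) := by
          apply mul_le_mul_of_nonneg_left h1n hr.le
    _ ≤ Real.log 2 := by
          rw [mul_one_div, div_le_iff₀ hn']; linarith
  -- bound on ‖x (tdisc n t)‖
  have hxt : ‖x (tdisc n t)‖ ≤ 2 * M := by
    have h := hmem (tdisc n t - t) (by linarith)
    have hseg : seg x t (tdisc n t - t) = x (tdisc n t) := by
      simp [seg]
    rw [hseg] at h
    have hexp : Real.exp (r * (t - tdisc n t)) ≤ 2 := by
      calc Real.exp (r * (t - tdisc n t)) ≤ Real.exp (Real.log 2) :=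
            Real.exp_le_exp.2 hrn
      _ = 2 := Real.exp_log (by norm_num)
    have hpos : 0 < Real.exp (r * (tdisc n t - t)) := Real.exp_pos _
    have : ‖x (tdisc n t)‖ ≤ M * Real.exp (r * (t - tdisc n t)) := by
      rw [← sub_nonneg]
      have : 0 ≤ (M - Real.exp (r * (tdisc n t - t)) * ‖x (tdisc n t)‖) *
          Real.exp (r * (t - tdisc n t)) := mul_nonneg (by linarith) (Real.exp_pos _).le
      have hee : Real.exp (r * (tdisc n t - t)) * Real.exp (r * (t - tdisc n t)) = 1 := by
        rw [← Real.exp_add]; ring_nf; exact Real.exp_zero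
      nlinarith [norm_nonneg (x (tdisc n t))]
    calc ‖x (tdisc n t)‖ ≤ M * Real.exp (r * (t - tdisc n t)) := this
    _ ≤ M * 2 := mul_le_mul_of_nonneg_left hexp hM0
    _ = 2 * M := mul_comm _ _
  -- main pointwise bound
  have hmain : rnorm r (seg x t - frozenSeg x n t) ≤ 4 * M := by
    apply Real.sSup_le
    · rintro v ⟨θ, hθ, rfl⟩
      simp only [Pi.sub_apply]
      by_cases hcase : t + θ ≤ tdisc n t
      · have : seg x t θ - frozenSeg x n t θ = 0 := by
          simp [seg, frozenSeg, min_eq_left hcase]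
        rw [this]; simp; positivity
      · have hmin : min (t + θ) (tdisc n t) = tdisc n t :=
          min_eq_right (le_of_not_ge hcase)
        have hθ0 : θ ≤ 0 := hθ
        have he1 : Real.exp (r * θ) ≤ 1 := Real.exp_le_one_iff.2 (by nlinarith)
        have hb : ‖seg x t θ - frozenSeg x n t θ‖ ≤ ‖seg x t θ‖ + ‖x (tdisc n t)‖ := by
          rw [frozenSeg, hmin]; exact norm_sub_le _ _
        have h2 : Real.exp (r * θ) * ‖seg x t θ - frozenSeg x n t θ‖
            ≤ Real.exp (r * θ) * ‖seg x t θ‖ + Real.exp (r * θ) * ‖x (tdisc n t)‖ := by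
          rw [← mul_add]; exact mul_le_mul_of_nonneg_left hb (Real.exp_pos _).le
        have h3 : Real.exp (r * θ) * ‖x (tdisc n t)‖ ≤ 2 * M := by
          calc Real.exp (r * θ) * ‖x (tdisc n t)‖ ≤ 1 * ‖x (tdisc n t)‖ :=
                mul_le_mul_of_nonneg_right he1 (norm_nonneg _)
          _ = ‖x (tdisc n t)‖ := one_mul _
          _ ≤ 2 * M := hxt
        have h4 := hmem θ hθ0
        linarith
    · linarith
  refine ⟨hmain, fun R hR hMR => ?_⟩
  calc rnorm r (seg x t - frozenSeg x n t) ≤ 4 * M := hmain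
  _ ≤ 4 * (R/3) := by linarith
  _ = 4/3 * R := by ring
end

section
/- Let r > 0, κ ∈ [0,1), t ≥ 0, and let ε > 0 be such that γ := κ²(1+ε)/ε < 1. Let x : ℝ → ℝ^d be continuous on [0,t] with initial segment ξ := x_0 satisfying ‖ξ‖_r < ∞, and let h : [0,t] → ℝ^d satisfy |h(s)| ≤ κ‖x_s‖_r for all s ∈ [0,t]. Set Γ(s) := x(s) − h(s). Then e^{2rt}‖x_t‖²_r ≤ (1/(1−γ))‖ξ‖²_r + ((1+ε)/(1−γ)) · sup_{0 < s ≤ t} e^{2rs}|Γ(s)|². -/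
/-!
Put `W(t) = sup_{u ≤ t} e^{ru} |x(u)|`, so that `e^{rs} ‖x_s‖_r = W(s) ≤ W(t)` for `s ≤ t`, and
continuity on `[0,t]` makes `W(t)` finite. For `0 < u ≤ t` the hypothesis on `h` gives
`e^{ru} |x(u)| ≤ e^{ru} |Γ(u)| + κ W(t)`, and Young's inequality
`(a + b)² ≤ (1 + ε) a² + ((1 + ε)/ε) b²` turns this into
`e^{2ru} |x(u)|² ≤ (1 + ε) sup_{0<s≤t} e^{2rs} |Γ(s)|² + γ W(t)²`; for `u ≤ 0` the bound is `‖ξ‖²_r`.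
Taking the supremum over `u ≤ t` and absorbing `γ W(t)²` (as `γ < 1` and `W(t) < ∞`) gives the claim.
-/

open Real Set
open scoped Pointwise

theorem add_sq_le_one_add_mul_sq_add_div_mul_sq {ε : ℝ} (hε : 0 < ε) (a b : ℝ) :
    (a + b) ^ 2 ≤ (1 + ε) * a ^ 2 + (1 + ε) / ε * b ^ 2 := by
  have hgap : (1 + ε) * a ^ 2 + (1 + ε) / ε * b ^ 2 - (a + b) ^ 2 = (ε * a - b) ^ 2 / ε := by
    field_simp
    ring
  have : 0 ≤ (ε * a - b) ^ 2 / ε := by positivity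
  linarith

theorem Real.sSup_sq_le {A : Set ℝ} {c : ℝ} (hA : A.Nonempty) (hA0 : ∀ a ∈ A, 0 ≤ a)
    (hc : ∀ a ∈ A, a ^ 2 ≤ c) : sSup A ^ 2 ≤ c := by
  obtain ⟨a, ha⟩ := hA
  have hle : sSup A ≤ √c := csSup_le ⟨a, ha⟩ fun b hb => Real.le_sqrt_of_sq_le (hc b hb)
  calc sSup A ^ 2 ≤ √c ^ 2 := pow_le_pow_left₀ (Real.sSup_nonneg hA0) hle 2
    _ = c := Real.sq_sqrt ((sq_nonneg a).trans (hc a ha))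

theorem BddAbove.image_Iic_of_continuousOn {f : ℝ → ℝ} {a b : ℝ} (hf : BddAbove (f '' Iic a))
    (hc : ContinuousOn f (Icc a b)) : BddAbove (f '' Iic b) :=
  (hf.union (isCompact_Icc.bddAbove_image hc)).mono <| by
    rw [← image_union]
    exact image_mono Iic_subset_Iic_union_Icc

section WeightedSup

variable {d : ℕ} (r : ℝ) (x : ℝ → EuclideanSpace ℝ (Fin d))

noncomputable def weightedSup (t : ℝ) : ℝ :=
  sSup ((fun u => exp (r * u) * ‖x u‖) '' Iic t)

theorem exp_mul_rnorm_seg (s : ℝ) : exp (r * s) * rnorm r (seg x s) = weightedSup r x s := by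
  have himage : (fun θ => exp (r * θ) * ‖seg x s θ‖) '' Iic 0
      = exp (-(r * s)) • ((fun u => exp (r * u) * ‖x u‖) '' Iic s) := by
    rw [← add_zero s, ← image_const_add_Iic, image_image, ← image_smul, image_image, add_zero]
    refine image_congr fun θ _ => ?_
    rw [smul_eq_mul, ← mul_assoc, ← exp_add, seg]
    ring_nf
  rw [rnorm, himage, Real.sSup_smul_of_nonneg (exp_pos _).le, smul_eq_mul, ← mul_assoc,
    ← exp_add, add_neg_cancel, exp_zero, one_mul, weightedSup]

theorem rnorm_seg_zero : rnorm r (seg x 0) = weightedSup r x 0 := by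
  simpa using exp_mul_rnorm_seg r x 0

variable {r x} {t : ℝ}

theorem exp_mul_norm_le_weightedSup (hB : BddAbove ((fun u => exp (r * u) * ‖x u‖) '' Iic t))
    {u : ℝ} (hu : u ≤ t) :
    exp (r * u) * ‖x u‖ ≤ weightedSup r x t :=
  le_csSup hB (mem_image_of_mem _ hu)

theorem weightedSup_mono (hB : BddAbove ((fun u => exp (r * u) * ‖x u‖) '' Iic t)) {s : ℝ}
    (hs : s ≤ t) : weightedSup r x s ≤ weightedSup r x t :=
  csSup_le_csSup hB (nonempty_Iic.image _) (image_mono (Iic_subset_Iic.2 hs))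

theorem exp_mul_norm_le_of_norm_le_rnorm {κ s : ℝ} {y : EuclideanSpace ℝ (Fin d)} (hκ0 : 0 ≤ κ)
    (hB : BddAbove ((fun u => exp (r * u) * ‖x u‖) '' Iic t)) (hs : s ≤ t)
    (hy : ‖y‖ ≤ κ * rnorm r (seg x s)) :
    exp (r * s) * ‖y‖ ≤ κ * weightedSup r x t :=
  calc exp (r * s) * ‖y‖ ≤ exp (r * s) * (κ * rnorm r (seg x s)) :=
        mul_le_mul_of_nonneg_left hy (exp_pos _).le
    _ = κ * weightedSup r x s := by rw [← exp_mul_rnorm_seg]; ring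
    _ ≤ κ * weightedSup r x t := mul_le_mul_of_nonneg_left (weightedSup_mono hB hs) hκ0

end WeightedSup

theorem exp_two_mul_mul_sq (a b : ℝ) : exp (2 * a) * b ^ 2 = (exp a * b) ^ 2 := by
  rw [mul_pow, sq (exp a), ← exp_add, two_mul]

section Neutral

variable {d : ℕ} {r κ t : ℝ} {x h : ℝ → EuclideanSpace ℝ (Fin d)}

theorem sq_exp_mul_norm_sub_le_sSup (hκ0 : 0 ≤ κ)
    (hB : BddAbove ((fun u => exp (r * u) * ‖x u‖) '' Iic t))
    (hh : ∀ s ∈ Ioc 0 t, ‖h s‖ ≤ κ * rnorm r (seg x s)) {s : ℝ} (hs : s ∈ Ioc 0 t) :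
    (exp (r * s) * ‖x s - h s‖) ^ 2
      ≤ sSup ((fun s => exp (2 * r * s) * ‖x s - h s‖ ^ 2) '' Ioc 0 t) := by
  have hbdd : BddAbove ((fun s => exp (2 * r * s) * ‖x s - h s‖ ^ 2) '' Ioc 0 t) := by
    refine ⟨((1 + κ) * weightedSup r x t) ^ 2, ?_⟩
    rintro _ ⟨u, hu, rfl⟩
    dsimp only
    rw [mul_assoc, exp_two_mul_mul_sq]
    refine pow_le_pow_left₀ (by positivity) ?_ 2
    calc exp (r * u) * ‖x u - h u‖ ≤ exp (r * u) * ‖x u‖ + exp (r * u) * ‖h u‖ := by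
          rw [← mul_add]
          exact mul_le_mul_of_nonneg_left (norm_sub_le _ _) (exp_pos _).le
      _ ≤ weightedSup r x t + κ * weightedSup r x t :=
          add_le_add (exp_mul_norm_le_weightedSup hB hu.2)
            (exp_mul_norm_le_of_norm_le_rnorm hκ0 hB hu.2 (hh u hu))
      _ = (1 + κ) * weightedSup r x t := by ring
  rw [← exp_two_mul_mul_sq, ← mul_assoc]
  exact le_csSup hbdd (mem_image_of_mem _ hs)

theorem weightedSup_sq_le (hκ0 : 0 ≤ κ) {ε : ℝ} (hε : 0 < ε)
    (hB0 : BddAbove ((fun u => exp (r * u) * ‖x u‖) '' Iic 0))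
    (hB : BddAbove ((fun u => exp (r * u) * ‖x u‖) '' Iic t))
    (hh : ∀ s ∈ Ioc 0 t, ‖h s‖ ≤ κ * rnorm r (seg x s)) :
    weightedSup r x t ^ 2 ≤ weightedSup r x 0 ^ 2
      + (1 + ε) * sSup ((fun s => exp (2 * r * s) * ‖x s - h s‖ ^ 2) '' Ioc 0 t)
      + κ ^ 2 * (1 + ε) / ε * weightedSup r x t ^ 2 := by
  set W := weightedSup r x t
  set S := sSup ((fun s => exp (2 * r * s) * ‖x s - h s‖ ^ 2) '' Ioc 0 t)
  have hS : 0 ≤ S := Real.sSup_nonneg <| by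
    rintro _ ⟨s, -, rfl⟩
    positivity
  refine Real.sSup_sq_le (nonempty_Iic.image _) (by rintro _ ⟨u, -, rfl⟩; positivity) ?_
  rintro _ ⟨u, hu, rfl⟩
  rcases le_or_gt u 0 with hu0 | hu0
  · have hpast := pow_le_pow_left₀ (by positivity) (exp_mul_norm_le_weightedSup hB0 hu0) 2
    have : 0 ≤ (1 + ε) * S + κ ^ 2 * (1 + ε) / ε * W ^ 2 := by positivity
    linarith
  · have hsplit : exp (r * u) * ‖x u‖ ≤ exp (r * u) * ‖x u - h u‖ + κ * W :=
      calc exp (r * u) * ‖x u‖ ≤ exp (r * u) * ‖x u - h u‖ + exp (r * u) * ‖h u‖ := by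
            rw [← mul_add]
            exact mul_le_mul_of_nonneg_left (norm_le_norm_sub_add _ _) (exp_pos _).le
        _ ≤ exp (r * u) * ‖x u - h u‖ + κ * W :=
            add_le_add_right (exp_mul_norm_le_of_norm_le_rnorm hκ0 hB hu (hh u ⟨hu0, hu⟩)) _
    calc (exp (r * u) * ‖x u‖) ^ 2 ≤ (exp (r * u) * ‖x u - h u‖ + κ * W) ^ 2 :=
          pow_le_pow_left₀ (by positivity) hsplit 2
      _ ≤ (1 + ε) * (exp (r * u) * ‖x u - h u‖) ^ 2 + (1 + ε) / ε * (κ * W) ^ 2 :=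
          add_sq_le_one_add_mul_sq_add_div_mul_sq hε _ _
      _ ≤ (1 + ε) * S + κ ^ 2 * (1 + ε) / ε * W ^ 2 := by
          rw [show (1 + ε) / ε * (κ * W) ^ 2 = κ ^ 2 * (1 + ε) / ε * W ^ 2 by ring]
          gcongr
          exact sq_exp_mul_norm_sub_le_sSup hκ0 hB hh ⟨hu0, hu⟩
      _ ≤ _ := by linarith [sq_nonneg (weightedSup r x 0)]

end Neutral

theorem weighted_norm_neutral_decomposition_general {d : ℕ} (r κ t ε : ℝ)
    (hκ0 : 0 ≤ κ) (hε : 0 < ε)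
    (hγ : κ ^ 2 * (1 + ε) / ε < 1)
    (x h : ℝ → EuclideanSpace ℝ (Fin d))
    (hx : ContinuousOn x (Set.Icc 0 t))
    (hξ : BddAbove ((fun θ => Real.exp (r * θ) * ‖seg x 0 θ‖) '' Set.Iic 0))
    (hh : ∀ s ∈ Set.Icc (0 : ℝ) t, ‖h s‖ ≤ κ * rnorm r (seg x s)) :
    Real.exp (2 * r * t) * (rnorm r (seg x t)) ^ 2
      ≤ 1 / (1 - κ ^ 2 * (1 + ε) / ε) * (rnorm r (seg x 0)) ^ 2
        + (1 + ε) / (1 - κ ^ 2 * (1 + ε) / ε)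
          * sSup ((fun s => Real.exp (2 * r * s) * ‖x s - h s‖ ^ 2) '' Set.Ioc 0 t) := by
  have hB0 : BddAbove ((fun u => exp (r * u) * ‖x u‖) '' Iic 0) := by simpa [seg] using hξ
  have hB := hB0.image_Iic_of_continuousOn (b := t) (by fun_prop)
  have key := weightedSup_sq_le hκ0 hε hB0 hB fun s hs => hh s (Ioc_subset_Icc_self hs)
  rw [mul_assoc, exp_two_mul_mul_sq, exp_mul_rnorm_seg, rnorm_seg_zero, div_mul_eq_mul_div,
    div_mul_eq_mul_div, ← add_div, le_div_iff₀ (by linarith)]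
  linarith

/-- let `r > 0`, `κ ∈ [0,1)`, `t ≥ 0`, `ε > 0` with `γ := κ²(1+ε)/ε < 1`. Let
`x` be continuous on `[0,t]` with `‖x_0‖_r < ∞` and let `h` satisfy `|h(s)| ≤ κ‖x_s‖_r` on
`[0,t]`. With `Γ(s) := x(s) − h(s)` one has
`e^{2rt}‖x_t‖²_r ≤ (1/(1−γ))‖x_0‖²_r + ((1+ε)/(1−γ)) sup_{0<s≤t} e^{2rs}|Γ(s)|²`. -/
theorem weighted_norm_neutral_decomposition {d : ℕ} (r κ t ε : ℝ)
    (hr : 0 < r) (hκ0 : 0 ≤ κ) (hκ1 : κ < 1) (ht : 0 ≤ t) (hε : 0 < ε)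
    (hγ : κ ^ 2 * (1 + ε) / ε < 1)
    (x h : ℝ → EuclideanSpace ℝ (Fin d))
    (hx : ContinuousOn x (Set.Icc 0 t))
    (hξ : BddAbove ((fun θ => Real.exp (r * θ) * ‖seg x 0 θ‖) '' Set.Iic 0))
    (hh : ∀ s ∈ Set.Icc (0 : ℝ) t, ‖h s‖ ≤ κ * rnorm r (seg x s)) :
    Real.exp (2 * r * t) * (rnorm r (seg x t)) ^ 2
      ≤ 1 / (1 - κ ^ 2 * (1 + ε) / ε) * (rnorm r (seg x 0)) ^ 2
        + (1 + ε) / (1 - κ ^ 2 * (1 + ε) / ε)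
          * sSup ((fun s => Real.exp (2 * r * s) * ‖x s - h s‖ ^ 2) '' Set.Ioc 0 t) :=
  weighted_norm_neutral_decomposition_general r κ t ε hκ0 hε hγ x h hx hξ hh
end
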